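/- arXiv:1907.05335 — 10 statements merged into one kernel-verified Lean document; each statement's English description precedes it below -/
import Mathlib

section
/- In R(A;i,j) the following identities hold: y·x^i·y = y, y·x^j·y = y, y·x^{i+j}·y = 0, and y·x^{2i}·y = −y·x^{2j}·y. -/
/-- The defining relations for `R(A;i,j)`: `x^i*y + y*x^j = 1` and `y^2 = 0`,
where `x` and `y` are the two generators of the free algebra. -/
inductive MatRel (A : Type*) [CommRing A] (i j : ℕ) :
    FreeAlgebra A (Fin 2) → FreeAlgebra A (Fin 2) → Prop
  | rel1 : MatRel A i j
      (FreeAlgebra.ι A (0 : Fin 2) ^ i * FreeAlgebra.ι A (1 : Fin 2) +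
        FreeAlgebra.ι A (1 : Fin 2) * FreeAlgebra.ι A (0 : Fin 2) ^ j) 1
  | rel2 : MatRel A i j (FreeAlgebra.ι A (1 : Fin 2) ^ 2) 0

/-- `R(A;i,j)`, the quotient of the free `A`-algebra on `x, y` by the two-sided ideal
generated by `x^i*y + y*x^j - 1` and `y^2`. -/
abbrev MatRing (A : Type*) [CommRing A] (i j : ℕ) : Type _ := RingQuot (MatRel A i j)

/-- The image of the generator `x` in `R(A;i,j)`. -/
noncomputable def Xgen (A : Type*) [CommRing A] (i j : ℕ) : MatRing A i j :=
  RingQuot.mkAlgHom A (MatRel A i j) (FreeAlgebra.ι A (0 : Fin 2))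

/-- The image of the generator `y` in `R(A;i,j)`. -/
noncomputable def Ygen (A : Type*) [CommRing A] (i j : ℕ) : MatRing A i j :=
  RingQuot.mkAlgHom A (MatRel A i j) (FreeAlgebra.ι A (1 : Fin 2))

lemma matKey {R : Type*} [Ring R] (a b y : R) (hc : a * b = b * a)
    (h1 : a * y + y * b = 1) (h2 : y * y = 0) :
    y * a * y = y ∧ y * b * y = y ∧ y * (a * b) * y = 0 ∧
      y * (a * a) * y = -(y * (b * b) * y) := by
  have hya : y * a * y = y := by
    have h := congrArg (y * ·) h1
    simp only [mul_add, mul_one] at h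
    rw [← mul_assoc, ← mul_assoc, h2, zero_mul, add_zero] at h
    exact h
  have hyb : y * b * y = y := by
    have h := congrArg (· * y) h1
    simp only [add_mul, one_mul] at h
    rw [mul_assoc a, h2, mul_zero, zero_add, mul_assoc] at h
    rw [mul_assoc]
    exact h
  have ha : a * y = 1 - y * b := eq_sub_of_add_eq h1
  have hab : y * (a * b) * y = 0 := by
    calc y * (a * b) * y = y * b * (a * y) := by rw [hc]; noncomm_ring
      _ = y * b * (1 - y * b) := by rw [ha]
      _ = y * b - y * b * y * b := by noncomm_ring
      _ = 0 := by rw [hyb, sub_self]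
  have hsum : y * (a * a) * y + y * (b * b) * y = 0 := by
    have expand : y * a * (a * y + y * b) * (b * y)
        = y * (a * a) * (y * b * y) + (y * a * y) * (b * b * y) := by noncomm_ring
    have e1 : y * a * (a * y + y * b) * (b * y) = y * (a * b) * y := by
      rw [h1]; noncomm_ring
    rw [e1, hab] at expand
    rw [hyb, hya, ← mul_assoc y (b*b) y] at expand
    exact expand.symm
  exact ⟨hya, hyb, hab, eq_neg_of_add_eq_zero_left hsum⟩

theorem stmt0 (A : Type*) [CommRing A] (i j : ℕ) (hi : 1 ≤ i) (hj : 1 ≤ j) :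
    Ygen A i j * Xgen A i j ^ i * Ygen A i j = Ygen A i j ∧
    Ygen A i j * Xgen A i j ^ j * Ygen A i j = Ygen A i j ∧
    Ygen A i j * Xgen A i j ^ (i + j) * Ygen A i j = 0 ∧
    Ygen A i j * Xgen A i j ^ (2 * i) * Ygen A i j
      = -(Ygen A i j * Xgen A i j ^ (2 * j) * Ygen A i j) := by
  have h1 : Xgen A i j ^ i * Ygen A i j + Ygen A i j * Xgen A i j ^ j = 1 := by
    have h := RingQuot.mkAlgHom_rel A (MatRel.rel1 : MatRel A i j _ _)
    simpa [Xgen, Ygen, map_add, map_mul, map_pow, map_one] using h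
  have h2 : Ygen A i j * Ygen A i j = 0 := by
    have h := RingQuot.mkAlgHom_rel A (MatRel.rel2 : MatRel A i j _ _)
    simpa [Ygen, pow_two, map_mul, map_pow, map_zero] using h
  have hc : Xgen A i j ^ i * Xgen A i j ^ j = Xgen A i j ^ j * Xgen A i j ^ i := by
    rw [← pow_add, ← pow_add, Nat.add_comm]
  obtain ⟨k1, k2, k3, k4⟩ := matKey (Xgen A i j ^ i) (Xgen A i j ^ j) (Ygen A i j) hc h1 h2
  refine ⟨k1, k2, ?_, ?_⟩
  · rw [pow_add]; exact k3
  · rw [two_mul, two_mul, pow_add, pow_add]; exact k4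
end

section
/- For every natural number n ≥ 1, in R(A;i,j) one has y·x^{i·n} = (−1)^n·x^{j·n}·y + Σ_{k=0}^{n−1} (−1)^{n−1−k}·x^{(n−1−k)·j + k·i}, and y·x^{j·n} = (−1)^n·x^{i·n}·y + Σ_{k=0}^{n−1} (−1)^{k}·x^{(n−1−k)·j + k·i}. -/
section Aux

variable {R : Type*} [Ring R]

private lemma negOnePow_mul_comm' (n : ℕ) (r : R) : (-1:R)^n * r = r * (-1:R)^n :=
  ((Commute.neg_one_left r).pow_left n).eq

private lemma move_aux (c w z : R) (hc : c*w = w*c) : (c * -1) * (w*z) = -(w*(c*z)) := by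
  have e : (c * -1) * (w*z) = -((c*w)*z) := by noncomm_ring
  rw [e, hc]; noncomm_ring

/-- The key identity: from `a*y + y*b = 1`, `y^2 = 0` and `a*b = b*a` we get
`y*a + b*y = 1`.  Indeed `g = y*a + b*y` is idempotent, and `g - 1` equals
`y*(a*a)*y + y*(b*b)*y`, whose square is zero since `y^2 = 0`; hence
`g - 1 = -(g-1)^2 = 0`. -/
private lemma key_lemma (a b y : R) (h1 : a*y + y*b = 1) (h2 : y*y = 0)
    (hc : a*b = b*a) : y*a + b*y = 1 := by
  have hay : a*y = 1 - y*b := eq_sub_of_add_eq h1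
  have hyb : y*b = 1 - a*y := eq_sub_of_add_eq' h1
  have a1 : y*a*y = y := by
    calc y*a*y = y*(a*y) := by rw [mul_assoc]
    _ = y*(1 - y*b) := by rw [hay]
    _ = y - y*y*b := by noncomm_ring
    _ = y := by rw [h2]; noncomm_ring
  have a2 : y*b*y = y := by
    calc y*b*y = (1 - a*y)*y := by rw [hyb]
    _ = y - a*(y*y) := by noncomm_ring
    _ = y := by rw [h2]; noncomm_ring
  have a3 : y*(b*a)*y = 0 := by
    calc y*(b*a)*y = (y*b)*(a*y) := by noncomm_ring
    _ = (1 - a*y)*(a*y) := by rw [hyb]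
    _ = a*y - a*(y*a*y) := by noncomm_ring
    _ = 0 := by rw [a1]; noncomm_ring
  have b1 : y*(a*a)*y = y*a - y*b := by
    calc y*(a*a)*y = (y*a)*(a*y) := by noncomm_ring
    _ = (y*a)*(1 - y*b) := by rw [hay]
    _ = y*a - (y*a*y)*b := by noncomm_ring
    _ = y*a - y*b := by rw [a1]
  have b2 : y*(b*b)*y = b*y - a*y := by
    calc y*(b*b)*y = (y*b)*(b*y) := by noncomm_ring
    _ = (1 - a*y)*(b*y) := by rw [hyb]
    _ = b*y - a*(y*b*y) := by noncomm_ring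
    _ = b*y - a*y := by rw [a2]
  have hz : ∀ u v : R, (y*u*y)*(y*v*y) = 0 := by
    intro u v
    calc (y*u*y)*(y*v*y) = (y*u)*(y*y)*(v*y) := by noncomm_ring
    _ = 0 := by rw [h2]; noncomm_ring
  have hT : y*a + b*y - 1 = y*(a*a)*y + y*(b*b)*y := by
    rw [b1, b2, ← h1]; abel
  have hTT : (y*a + b*y - 1)*(y*a + b*y - 1) = 0 := by
    rw [hT, add_mul, mul_add, mul_add, hz, hz, hz, hz]; simp
  have e2 : (y*a + b*y - 1)*(y*a + b*y - 1)
      = (y*a + b*y)*(y*a + b*y) - (y*a + b*y) - (y*a + b*y) + 1 := by noncomm_ring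
  have hg : (y*a + b*y)*(y*a + b*y) = y*a + b*y := by
    have e : (y*a + b*y)*(y*a + b*y)
        = (y*a*y)*a + y*(a*b)*y + b*(y*y)*a + b*(y*b*y) := by noncomm_ring
    rw [e, hc, a3, a1, a2, h2]; noncomm_ring
  rw [e2, hg] at hTT
  have h0 : (y*a + b*y) - 1 = 0 := by
    calc (y*a + b*y) - 1
        = -((y*a + b*y) - (y*a + b*y) - (y*a + b*y) + 1) := by abel
    _ = 0 := by rw [hTT]; simp
  simpa using sub_eq_zero.mp h0

/-- The basic induction: from `x^i*y + y*x^j = 1` alone, we can compute `y*x^(j*n)`. -/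
private lemma main_ind (x y : R) (i j : ℕ) (h1 : x^i*y + y*x^j = 1) :
    ∀ n, 1 ≤ n → y*x^(j*n) = (-1:R)^n * x^(i*n)*y
      + ∑ k ∈ Finset.range n, (-1:R)^k * x^((n-1-k)*j + k*i) := by
  intro n hn
  induction n, hn using Nat.le_induction with
  | base =>
      have hb : y * x^j = 1 - x^i * y := eq_sub_of_add_eq' h1
      simp only [Finset.sum_range_one, mul_one, pow_one, pow_zero, Nat.zero_mul,
        Nat.sub_self, Nat.zero_add, add_zero, Nat.sub_zero]
      rw [hb]; noncomm_ring
  | succ n hn ih =>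
      have hterm : ∀ k ∈ Finset.range n,
          (-1:R)^(k+1) * x^((n-(k+1))*j + (k+1)*i)
            = -(x^i * ((-1:R)^k * x^((n-1-k)*j + k*i))) := by
        intro k hk
        have e1 : n - (k+1) = n - 1 - k := by omega
        have e2 : (k+1)*i = i + k*i := by ring
        have e3 : (n-1-k)*j + (i + k*i) = i + ((n-1-k)*j + k*i) := by ring
        rw [e1, e2, pow_succ, e3, pow_add]
        exact move_aux _ _ _ (negOnePow_mul_comm' k (x^i))
      have T1 : x^i * ((-1:R)^n * x^(i*n) * y) = -((-1:R)^(n+1) * x^(i*(n+1)) * y) := by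
        have e : i*(n+1) = i + i*n := by ring
        rw [e, pow_add x i (i*n), pow_succ (-1:R) n]
        calc x^i * ((-1:R)^n * x^(i*n) * y)
            = (x^i * (-1:R)^n) * (x^(i*n) * y) := by noncomm_ring
        _ = ((-1:R)^n * x^i) * (x^(i*n)*y) := by rw [← negOnePow_mul_comm']
        _ = -(((-1:R)^n * -1) * (x^i * x^(i*n)) * y) := by noncomm_ring
      have hL : y * x^(j*(n+1))
          = x^(j*n) - (x^i * ((-1:R)^n * x^(i*n)*y)
            + ∑ k ∈ Finset.range n, x^i * ((-1:R)^k * x^((n-1-k)*j + k*i))) := by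
        have e : j*(n+1) = j + j*n := by ring
        rw [e, pow_add, ← mul_assoc, eq_sub_of_add_eq' h1, sub_mul, one_mul,
          mul_assoc, ih, mul_add, Finset.mul_sum]
      rw [hL, T1]
      simp only [Nat.add_sub_cancel]
      rw [Finset.sum_range_succ']
      rw [Finset.sum_congr rfl hterm]
      simp only [pow_zero, one_mul, Nat.zero_mul, Nat.sub_zero, add_zero]
      rw [show n*j = j*n by ring]
      rw [Finset.sum_neg_distrib]
      abel

end Aux

theorem stmt2 (A : Type*) [CommRing A] (i j : ℕ) (hi : 1 ≤ i) (hj : 1 ≤ j)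
    (n : ℕ) (hn : 1 ≤ n) :
    Ygen A i j * Xgen A i j ^ (i * n)
      = (-1 : MatRing A i j) ^ n * Xgen A i j ^ (j * n) * Ygen A i j +
        ∑ k ∈ Finset.range n,
          (-1 : MatRing A i j) ^ (n - 1 - k) * Xgen A i j ^ ((n - 1 - k) * j + k * i) ∧
    Ygen A i j * Xgen A i j ^ (j * n)
      = (-1 : MatRing A i j) ^ n * Xgen A i j ^ (i * n) * Ygen A i j +
        ∑ k ∈ Finset.range n,
          (-1 : MatRing A i j) ^ k * Xgen A i j ^ ((n - 1 - k) * j + k * i) := by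
  set x := Xgen A i j with hx
  set y := Ygen A i j with hy
  have hrel1 : x^i * y + y * x^j = 1 := by
    have h := RingQuot.mkAlgHom_rel A (MatRel.rel1 (A := A) (i := i) (j := j))
    simpa [hx, hy, Xgen, Ygen, map_add, map_mul, map_pow, map_one] using h
  have hrel2 : y * y = 0 := by
    have h := RingQuot.mkAlgHom_rel A (MatRel.rel2 (A := A) (i := i) (j := j))
    simpa [hy, Ygen, map_pow, map_zero, pow_two] using h
  have hkey : y * x^i + x^j * y = 1 :=
    key_lemma _ _ _ hrel1 hrel2 ((Commute.refl x).pow_pow i j).eq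
  have h1' : x^j * y + y * x^i = 1 := by rw [add_comm]; exact hkey
  constructor
  · have h := main_ind x y j i h1' n hn
    have hsum : (∑ k ∈ Finset.range n, (-1 : MatRing A i j)^(n-1-k) * x^((n-1-k)*j + k*i))
        = ∑ k ∈ Finset.range n, (-1 : MatRing A i j)^k * x^((n-1-k)*i + k*j) := by
      rw [← Finset.sum_range_reflect
        (fun k => (-1 : MatRing A i j)^k * x^((n-1-k)*i + k*j)) n]
      refine Finset.sum_congr rfl fun k hk => ?_
      have hk' : k < n := Finset.mem_range.mp hk
      have e0 : n-1-(n-1-k) = k := by omega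
      simp only [e0]
      rw [Nat.add_comm (k*i) ((n-1-k)*j)]
    rw [h, hsum]
  · exact main_ind x y i j hrel1 n hn
end

section
/- Let p(X), q(X) be polynomials in one variable over A. If the images p(x) and q(x) in R(A;i,j) satisfy p(x)·y = q(x)·y, then p(x) = q(x) in R(A;i,j). -/
theorem stmt3 (A : Type*) [CommRing A] (i j : ℕ) (hi : 1 ≤ i) (hj : 1 ≤ j)
    (p q : Polynomial A)
    (h : Polynomial.aeval (Xgen A i j) p * Ygen A i j
        = Polynomial.aeval (Xgen A i j) q * Ygen A i j) :
    Polynomial.aeval (Xgen A i j) p = Polynomial.aeval (Xgen A i j) q := by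
  set x := Xgen A i j with hx
  set y := Ygen A i j with hy
  have hrel : x ^ i * y + y * x ^ j = 1 := by
    have := RingQuot.mkAlgHom_rel A (MatRel.rel1 (A := A) (i := i) (j := j))
    simpa [hx, hy, Xgen, Ygen, map_add, map_mul, map_pow, map_one] using this
  have hcomm : Commute x (Polynomial.aeval x (p - q)) := by
    show x * _ = _ * x
    have h1 : x * Polynomial.aeval x (p - q) = Polynomial.aeval x (Polynomial.X * (p - q)) := by
      rw [map_mul, Polynomial.aeval_X]
    have h2 : Polynomial.aeval x (p - q) * x = Polynomial.aeval x ((p - q) * Polynomial.X) := by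
      rw [map_mul, Polynomial.aeval_X]
    rw [h1, h2, mul_comm]
  have hzero : Polynomial.aeval x (p - q) * y = 0 := by
    rw [map_sub, sub_mul, h, sub_self]
  have key : Polynomial.aeval x (p - q) = 0 := by
    calc Polynomial.aeval x (p - q)
        = Polynomial.aeval x (p - q) * (x ^ i * y + y * x ^ j) := by rw [hrel, mul_one]
      _ = x ^ i * (Polynomial.aeval x (p - q) * y) + (Polynomial.aeval x (p - q) * y) * x ^ j := by
          rw [mul_add]
          congr 1
          · rw [← mul_assoc, ← mul_assoc, ((hcomm.pow_left i).symm).eq]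
          · rw [mul_assoc]
      _ = 0 := by rw [hzero, mul_zero, zero_mul, add_zero]
  rw [map_sub] at key
  exact sub_eq_zero.mp key
end

section
/- If i ≠ j, then the element x is invertible (a unit) in R(A;i,j). -/
/-- The "mirror" trick: in any ring, if `S*y + y*T = 1` with `S,T` commuting and
`y^2 = 0`, then also `T*y + y*S = 1`.  (Key: `w := T*y + y*S` is an idempotent,
`e := S*y` is an idempotent with `e*w = e` and `w*e = w - 1 + e`, which forces
`z := 1 - w` to satisfy `z = z*e`, `e*z = 0`, hence `z^2 = 0`; but `z^2 = z`.) -/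
theorem mirror_rel {R : Type*} [Ring R] (S T y : R) (hST : S * T = T * S)
    (hyy : y * y = 0) (h : S * y + y * T = 1) : T * y + y * S = 1 := by
  have hyT : y * T = 1 - S * y := by rw [← h]; abel
  have hSy : S * y = 1 - y * T := by rw [← h]; abel
  have c1 : y * S * y = y := by
    calc y * S * y = y * (S * y + y * T) - y * y * T := by noncomm_ring
      _ = y * 1 - 0 * T := by rw [h, hyy]
      _ = y := by noncomm_ring
  have c2 : y * T * y = y := by
    calc y * T * y = (S * y + y * T) * y - S * (y * y) := by noncomm_ring
      _ = 1 * y - S * 0 := by rw [h, hyy]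
      _ = y := by noncomm_ring
  have c3 : y * T * (S * y) = 0 := by
    calc y * T * (S * y) = (1 - S * y) * (S * y) := by rw [hyT]
      _ = S * y - S * (y * S * y) := by noncomm_ring
      _ = S * y - S * y := by rw [c1]
      _ = 0 := sub_self _
  have c4 : y * S * (S * y) = y * S - y * T := by
    calc y * S * (S * y) = y * S * (1 - y * T) := by rw [hSy]
      _ = y * S - y * S * y * T := by noncomm_ring
      _ = y * S - y * T := by rw [c1]
  have hw2 : (T * y + y * S) * (T * y + y * S) = T * y + y * S := by
    calc (T * y + y * S) * (T * y + y * S)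
        = T * (y * T * y) + T * (y * y) * S + y * (S * T) * y + (y * S * y) * S := by
          noncomm_ring
      _ = T * y + T * 0 * S + y * (T * S) * y + y * S := by rw [c2, hyy, hST, c1]
      _ = T * y + y * T * (S * y) + y * S := by noncomm_ring
      _ = T * y + 0 + y * S := by rw [c3]
      _ = T * y + y * S := by abel
  have hew : (S * y) * (T * y + y * S) = S * y := by
    calc (S * y) * (T * y + y * S) = S * (y * T * y) + S * (y * y) * S := by noncomm_ring
      _ = S * y + S * 0 * S := by rw [c2, hyy]
      _ = S * y := by noncomm_ring
  have hwe : (T * y + y * S) * (S * y) = (T * y + y * S) - 1 + S * y := by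
    calc (T * y + y * S) * (S * y) = T * (y * S * y) + y * S * (S * y) := by noncomm_ring
      _ = T * y + (y * S - y * T) := by rw [c1, c4]
      _ = T * y + (y * S - (1 - S * y)) := by rw [hyT]
      _ = (T * y + y * S) - 1 + S * y := by abel
  set w := T * y + y * S with hw
  have hze : (1 - w) * (S * y) = 1 - w := by
    calc (1 - w) * (S * y) = S * y - w * (S * y) := by noncomm_ring
      _ = S * y - (w - 1 + S * y) := by rw [hwe]
      _ = 1 - w := by abel
  have hez : (S * y) * (1 - w) = 0 := by
    calc (S * y) * (1 - w) = S * y - (S * y) * w := by noncomm_ring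
      _ = S * y - S * y := by rw [hew]
      _ = 0 := sub_self _
  have t2 : (1 - w) * (1 - w) = 0 := by
    calc (1 - w) * (1 - w) = ((1 - w) * (S * y)) * (1 - w) := by rw [hze]
      _ = (1 - w) * ((S * y) * (1 - w)) := by rw [mul_assoc]
      _ = (1 - w) * 0 := by rw [hez]
      _ = 0 := mul_zero _
  have t1 : (1 - w) * (1 - w) = 1 - w := by
    calc (1 - w) * (1 - w) = 1 - w - w + w * w := by noncomm_ring
      _ = 1 - w - w + w := by rw [hw2]
      _ = 1 - w := by abel
  rw [t2] at t1
  have : w = 1 := by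
    have := sub_eq_zero.mp t1.symm
    exact this.symm
  rw [← this]

/-- Main engine: if `x^m*y + y*x^n = 1` with `1 ≤ m < n` and `y^2 = 0`,
then `x` is a unit. -/
theorem isUnit_of_rel {R : Type*} [Ring R] (x y : R) (m n : ℕ) (hm : 1 ≤ m)
    (hmn : m < n) (h1 : x ^ m * y + y * x ^ n = 1) (hyy : y * y = 0) :
    IsUnit x := by
  obtain ⟨d, rfl⟩ : ∃ d, n = m + d := ⟨n - m, by omega⟩
  obtain ⟨m', rfl⟩ : ∃ k, m = k + 1 := ⟨m - 1, by omega⟩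
  obtain ⟨d', rfl⟩ : ∃ k, d = k + 1 := ⟨d - 1, by omega⟩
  set S := x ^ (m' + 1) with hS
  set g := x ^ (d' + 1) with hg
  set T := x ^ (m' + 1 + (d' + 1)) with hT
  have hSg : S * g = T := by rw [hS, hg, hT, ← pow_add]
  have hgS : g * S = T := by rw [hS, hg, hT, ← pow_add, Nat.add_comm]
  have hcomm : S * T = T * S := by
    rw [hS, hT, ← pow_add, ← pow_add, Nat.add_comm]
  have h1m : T * y + y * S = 1 := mirror_rel S T y hcomm hyy h1
  have k1 : y * S = 1 - T * y := by rw [← h1m]; abel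
  have k2 : y * T = 1 - S * y := by rw [← h1]; abel
  have k2' : S * y = 1 - y * T := by rw [← h1]; abel
  -- right inverse
  have e2 : S * y + g - S * g * y * g = 1 := by
    calc S * y + g - S * g * y * g
        = S * y + (1 - (S * g) * y) * g := by noncomm_ring
      _ = S * y + (1 - T * y) * g := by rw [hSg]
      _ = S * y + (y * S) * g := by rw [← k1]
      _ = S * y + y * (S * g) := by rw [mul_assoc]
      _ = S * y + y * T := by rw [hSg]
      _ = 1 := h1
  -- left inverse
  have e2' : y * S + g - g * y * S * g = 1 := by
    calc y * S + g - g * y * S * g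
        = y * S + g * (1 - y * (S * g)) := by noncomm_ring
      _ = y * S + g * (1 - y * T) := by rw [hSg]
      _ = y * S + g * (S * y) := by rw [← k2']
      _ = y * S + (g * S) * y := by rw [mul_assoc]
      _ = y * S + T * y := by rw [hgS]
      _ = 1 := by rw [← h1m]; abel
  have hxm : x * x ^ m' = S := by rw [hS, ← pow_succ']
  have hmx : x ^ m' * x = S := by rw [hS, ← pow_succ]
  have hxd : x * x ^ d' = g := by rw [hg, ← pow_succ']
  have hdx : x ^ d' * x = g := by rw [hg, ← pow_succ]
  set r := x ^ m' * y + x ^ d' - x ^ m' * g * y * g with hr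
  set l := y * x ^ m' + x ^ d' - g * y * S * x ^ d' with hl
  have hxr : x * r = 1 := by
    calc x * r = (x * x ^ m') * y + (x * x ^ d') - (x * x ^ m') * g * y * g := by
          rw [hr]; noncomm_ring
      _ = S * y + g - S * g * y * g := by rw [hxm, hxd]
      _ = 1 := e2
  have hlx : l * x = 1 := by
    calc l * x = y * (x ^ m' * x) + (x ^ d' * x) - g * y * S * (x ^ d' * x) := by
          rw [hl]; noncomm_ring
      _ = y * S + g - g * y * S * g := by rw [hmx, hdx]
      _ = 1 := e2'
  have hlr : l = r := by
    calc l = l * (x * r) := by rw [hxr, mul_one]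
      _ = (l * x) * r := by rw [mul_assoc]
      _ = r := by rw [hlx, one_mul]
  exact ⟨⟨x, r, hxr, by rw [← hlr]; exact hlx⟩, rfl⟩

theorem stmt4 (A : Type*) [CommRing A] (i j : ℕ) (hi : 1 ≤ i) (hj : 1 ≤ j)
    (hij : i ≠ j) : IsUnit (Xgen A i j) := by
  have h1 : Xgen A i j ^ i * Ygen A i j + Ygen A i j * Xgen A i j ^ j = 1 := by
    simpa only [Xgen, Ygen, map_add, map_mul, map_pow, map_one] using
      RingQuot.mkAlgHom_rel A (MatRel.rel1 (A := A) (i := i) (j := j))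
  have h2 : Ygen A i j * Ygen A i j = 0 := by
    have := RingQuot.mkAlgHom_rel A (MatRel.rel2 (A := A) (i := i) (j := j))
    simpa only [Ygen, pow_two, map_mul, map_zero] using this
  rcases hij.lt_or_gt with h | h
  · exact isUnit_of_rel (Xgen A i j) (Ygen A i j) i j hi h h1 h2
  · have hcomm : Xgen A i j ^ i * Xgen A i j ^ j = Xgen A i j ^ j * Xgen A i j ^ i := by
      rw [← pow_add, ← pow_add, Nat.add_comm]
    have h1' : Xgen A i j ^ j * Ygen A i j + Ygen A i j * Xgen A i j ^ i = 1 :=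
      mirror_rel _ _ _ hcomm h2 h1
    exact isUnit_of_rel (Xgen A i j) (Ygen A i j) j i hj h h1' h2
end

section
/- The elements x^{i+j} and x^i − x^j lie in the center of R(A;i,j), i.e. each of them commutes with every element of R(A;i,j). -/
/-- The first defining relation, in `R(A;i,j)`. -/
lemma matR1 (A : Type*) [CommRing A] (i j : ℕ) :
    Xgen A i j ^ i * Ygen A i j + Ygen A i j * Xgen A i j ^ j = 1 := by
  have h := RingQuot.mkAlgHom_rel A (MatRel.rel1 (A := A) (i := i) (j := j))
  simpa [Xgen, Ygen, map_add, map_mul, map_pow, map_one] using h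

/-- The second defining relation, in `R(A;i,j)`. -/
lemma matR2 (A : Type*) [CommRing A] (i j : ℕ) :
    Ygen A i j * Ygen A i j = 0 := by
  have h := RingQuot.mkAlgHom_rel A (MatRel.rel2 (A := A) (i := i) (j := j))
  simpa [Ygen, map_pow, map_zero, pow_two] using h

/-- An element of `R(A;i,j)` commuting with both generators is central. -/
lemma matCentral (A : Type*) [CommRing A] (i j : ℕ) (u : MatRing A i j)
    (hx : Xgen A i j * u = u * Xgen A i j) (hy : Ygen A i j * u = u * Ygen A i j) :
    ∀ z : MatRing A i j, z * u = u * z := by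
  intro z
  obtain ⟨w, rfl⟩ := RingQuot.mkAlgHom_surjective A (MatRel A i j) z
  induction w with
  | grade0 r =>
      rw [AlgHom.commutes]
      exact Algebra.commutes r u
  | grade1 m =>
      fin_cases m
      · exact hx
      · exact hy
  | mul a b ha hb =>
      rw [map_mul, mul_assoc, hb, ← mul_assoc, ha, mul_assoc]
  | add a b ha hb =>
      rw [map_add, add_mul, mul_add, ha, hb]

/-- Core computation in an arbitrary ring: if `a*Y + Y*b = 1`, `Y*Y = 0` and `a*b = b*a`,
then `Y` commutes with `a - b` and with `a*b`. -/
lemma key_comm {R : Type*} [Ring R] (a b Y : R) (R1 : a * Y + Y * b = 1) (R2 : Y * Y = 0)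
    (hab : a * b = b * a) :
    Y * (a - b) = (a - b) * Y ∧ Y * (a * b) = (a * b) * Y := by
  have haY : a * Y = 1 - Y * b := by rw [← R1]; noncomm_ring
  have hYb : Y * b = 1 - a * Y := by rw [← R1]; noncomm_ring
  have h1 : Y * a * Y = Y := by
    have e : Y * a * Y + Y * Y * b = Y := by
      calc Y * a * Y + Y * Y * b = Y * (a * Y + Y * b) := by noncomm_ring
        _ = Y := by rw [R1, mul_one]
    rw [R2, zero_mul, add_zero] at e; exact e
  have h2 : Y * b * Y = Y := by
    have e : a * (Y * Y) + Y * b * Y = Y := by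
      calc a * (Y * Y) + Y * b * Y = (a * Y + Y * b) * Y := by noncomm_ring
        _ = Y := by rw [R1, one_mul]
    rw [R2, mul_zero, zero_add] at e; exact e
  have hA : Y * (a * a) * Y = Y * a - Y * b := by
    calc Y * (a * a) * Y = Y * a * (a * Y) := by noncomm_ring
      _ = Y * a * (1 - Y * b) := by rw [haY]
      _ = Y * a - Y * a * Y * b := by noncomm_ring
      _ = Y * a - Y * b := by rw [h1]
  have hB : Y * (b * b) * Y = b * Y - a * Y := by
    calc Y * (b * b) * Y = Y * b * (b * Y) := by noncomm_ring
      _ = (1 - a * Y) * (b * Y) := by rw [hYb]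
      _ = b * Y - a * (Y * b * Y) := by noncomm_ring
      _ = b * Y - a * Y := by rw [h2]
  have hC : Y * (a * b) * Y = 0 := by
    calc Y * (a * b) * Y = Y * b * (a * Y) := by rw [hab]; noncomm_ring
      _ = Y * b * (1 - Y * b) := by rw [haY]
      _ = Y * b - Y * b * Y * b := by noncomm_ring
      _ = Y * b - Y * b := by rw [h2]
      _ = 0 := sub_self _
  have hIns : Y * (a * a) * Y + Y * (b * b) * Y = Y * (a * b) * Y := by
    calc Y * (a * a) * Y + Y * (b * b) * Y
        = Y * a * a * (Y * b * Y) + (Y * a * Y) * (b * (b * Y)) := by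
          rw [h2, h1]; noncomm_ring
      _ = Y * a * (a * Y + Y * b) * (b * Y) := by noncomm_ring
      _ = Y * a * 1 * (b * Y) := by rw [R1]
      _ = Y * (a * b) * Y := by noncomm_ring
  have hd : Y * a - Y * b + (b * Y - a * Y) = 0 := by
    rw [← hA, ← hB, hIns, hC]
  have hcomm : Y * (a - b) = (a - b) * Y := by
    have e : Y * (a - b) - (a - b) * Y = Y * a - Y * b + (b * Y - a * Y) := by
      noncomm_ring
    rw [hd] at e
    exact sub_eq_zero.mp e
  refine ⟨hcomm, ?_⟩
  have hbY : b * Y = 1 - Y * a := by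
    have e2 : b * Y + Y * a = a * Y + Y * b + (Y * (a - b) - (a - b) * Y) := by
      noncomm_ring
    rw [hcomm, sub_self, add_zero, R1] at e2
    rw [← e2]; noncomm_ring
  calc Y * (a * b) = (Y * a) * b := by noncomm_ring
    _ = (1 - b * Y) * b := by rw [show Y * a = 1 - b * Y by rw [hbY]; noncomm_ring]
    _ = b - b * (Y * b) := by noncomm_ring
    _ = b - b * (1 - a * Y) := by rw [hYb]
    _ = b * a * Y := by noncomm_ring
    _ = (a * b) * Y := by rw [hab]

theorem stmt7 (A : Type*) [CommRing A] (i j : ℕ) (hi : 1 ≤ i) (hj : 1 ≤ j) :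
    (∀ z : MatRing A i j, z * Xgen A i j ^ (i + j) = Xgen A i j ^ (i + j) * z) ∧
    (∀ z : MatRing A i j,
      z * (Xgen A i j ^ i - Xgen A i j ^ j) = (Xgen A i j ^ i - Xgen A i j ^ j) * z) := by
  set X := Xgen A i j with hX
  set Y := Ygen A i j with hY
  have hab : X ^ i * X ^ j = X ^ j * X ^ i := by
    rw [← pow_add, ← pow_add, Nat.add_comm]
  obtain ⟨hsub, hmul⟩ := key_comm (X ^ i) (X ^ j) Y (matR1 A i j) (matR2 A i j) hab
  have hxpow : ∀ n : ℕ, X * X ^ n = X ^ n * X := fun n =>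
    ((Commute.refl X).pow_right n).eq
  constructor
  · intro z
    apply matCentral A i j _ _ _ z
    · rw [← hX, hxpow]
    · rw [← hY, pow_add, hmul]
  · intro z
    apply matCentral A i j _ _ _ z
    · rw [← hX, mul_sub, sub_mul, hxpow, hxpow]
    · rw [← hY, hsub]
end

section
/- The four elements e₁₁ = y·x^j, e₁₂ = y, e₂₁ = x^i·y·x^j, e₂₂ = x^i·y of R(A;i,j) form a complete set of 2×2 matrix units: e₁₁ + e₂₂ = 1, and e_{hk}·e_{lm} = δ_{kl}·e_{hm} for all h,k,l,m ∈ {1,2}, where δ is the Kronecker delta. -/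
theorem stmt10 (A : Type*) [CommRing A] (i j : ℕ) (hi : 1 ≤ i) (hj : 1 ≤ j)
    (e : Fin 2 → Fin 2 → MatRing A i j)
    (he11 : e 0 0 = Ygen A i j * Xgen A i j ^ j)
    (he12 : e 0 1 = Ygen A i j)
    (he21 : e 1 0 = Xgen A i j ^ i * Ygen A i j * Xgen A i j ^ j)
    (he22 : e 1 1 = Xgen A i j ^ i * Ygen A i j) :
    e 0 0 + e 1 1 = 1 ∧
    ∀ h k l m : Fin 2, e h k * e l m = if k = l then e h m else 0 := by
  set x := Xgen A i j with hx
  set y := Ygen A i j with hy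
  have h1 : x ^ i * y + y * x ^ j = 1 := by
    have := RingQuot.mkAlgHom_rel A (MatRel.rel1 (A := A) (i := i) (j := j))
    simpa [hx, hy, Xgen, Ygen, map_add, map_mul, map_pow, map_one] using this
  have h2 : y * y = 0 := by
    have := RingQuot.mkAlgHom_rel A (MatRel.rel2 (A := A) (i := i) (j := j))
    simpa [hy, Ygen, map_pow, map_zero, sq] using this
  have hb : y * x ^ j = 1 - x ^ i * y := by
    rw [eq_sub_iff_add_eq, add_comm]; exact h1
  have ha : x ^ i * y = 1 - y * x ^ j := by
    rw [eq_sub_iff_add_eq]; exact h1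
  have L2' : y * (x ^ j * y) = y := by
    rw [← mul_assoc, hb, sub_mul, one_mul, mul_assoc, h2, mul_zero, sub_zero]
  have L3' : y * (x ^ i * y) = y := by
    rw [ha, mul_sub, mul_one, ← mul_assoc, h2, zero_mul, sub_zero]
  have L4' : y * (x ^ j * (x ^ i * y)) = 0 := by
    rw [← mul_assoc, ha, mul_sub, mul_one, ← mul_assoc, mul_assoc y, L2', sub_self]
  have L1 : ∀ c, y * (y * c) = 0 := by
    intro c; rw [← mul_assoc, h2, zero_mul]
  have L2 : ∀ c, y * (x ^ j * (y * c)) = y * c := by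
    intro c
    have h : y * (x ^ j * (y * c)) = y * (x ^ j * y) * c := by noncomm_ring
    rw [h, L2']
  have L3 : ∀ c, y * (x ^ i * (y * c)) = y * c := by
    intro c
    have h : y * (x ^ i * (y * c)) = y * (x ^ i * y) * c := by noncomm_ring
    rw [h, L3']
  have L4 : ∀ c, y * (x ^ j * (x ^ i * (y * c))) = 0 := by
    intro c
    have h : y * (x ^ j * (x ^ i * (y * c))) = y * (x ^ j * (x ^ i * y)) * c := by
      noncomm_ring
    rw [h, L4', zero_mul]
  constructor
  · rw [he11, he22, ← h1]; exact add_comm _ _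
  · intro h k l m
    fin_cases h <;> fin_cases k <;> fin_cases l <;> fin_cases m <;>
      simp [he11, he12, he21, he22, mul_assoc, h2, L1, L2, L3, L4, L2', L3', L4',
        mul_zero, zero_mul]
end

section
/- For every n ≥ 1 the following identities hold in A[t]: g(2n−1) = (g(n) + g(n−1))·(g(n) − g(n−1)); g(2n) − 1 = (g(n+1) − g(n))·(g(n) + g(n−1)); and g(2n) + 1 = (g(n+1) + g(n))·(g(n) − g(n−1)). -/
/-- The recursively defined polynomials `g(0) = 0`, `g(1) = 1`,
`g(n) = t*g(n-1) - g(n-2)`, in the polynomial ring `A[t]`. -/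
noncomputable def gpoly (A : Type*) [CommRing A] : ℕ → Polynomial A
  | 0 => 0
  | 1 => 1
  | (n + 2) => Polynomial.X * gpoly A (n + 1) - gpoly A n

lemma gpoly_add (A : Type*) [CommRing A] (m n : ℕ) :
    gpoly A (m + n + 1) = gpoly A (m + 1) * gpoly A (n + 1) - gpoly A m * gpoly A n := by
  induction n using Nat.twoStepInduction generalizing m with
  | zero => simp [gpoly]
  | one => show gpoly A (m + 2) = _; simp [gpoly]; ring
  | more n ih1 ih2 =>
    have h3 : m + (n + 2) + 1 = (m + n + 1) + 2 := by ring
    have h4 : m + (n + 1) + 1 = (m + n) + 2 := by ring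
    rw [h3, show gpoly A ((m+n+1)+2) = Polynomial.X * gpoly A (m+n+1+1) - gpoly A (m+n+1) from rfl,
      show m + n + 1 + 1 = m + (n+1) + 1 by ring, ih2, ih1,
      show gpoly A (n+2+1) = Polynomial.X * gpoly A (n+2) - gpoly A (n+1) from rfl,
      show gpoly A (n+2) = Polynomial.X * gpoly A (n+1) - gpoly A n from rfl]
    ring

lemma gpoly_cassini (A : Type*) [CommRing A] (n : ℕ) :
    gpoly A (n + 2) * gpoly A n = gpoly A (n + 1) ^ 2 - 1 := by
  induction n with
  | zero => simp [gpoly]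
  | succ n ih =>
    rw [show gpoly A (n+1+2) = Polynomial.X * gpoly A (n+2) - gpoly A (n+1) from rfl]
    have g2 : gpoly A (n+2) = Polynomial.X * gpoly A (n+1) - gpoly A n := rfl
    rw [g2] at ih
    rw [show n+1+1 = n+2 from rfl, g2]
    linear_combination ih

theorem stmt13 (A : Type*) [CommRing A] (n : ℕ) (hn : 1 ≤ n) :
    gpoly A (2 * n - 1) = (gpoly A n + gpoly A (n - 1)) * (gpoly A n - gpoly A (n - 1)) ∧
    gpoly A (2 * n) - 1 = (gpoly A (n + 1) - gpoly A n) * (gpoly A n + gpoly A (n - 1)) ∧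
    gpoly A (2 * n) + 1 = (gpoly A (n + 1) + gpoly A n) * (gpoly A n - gpoly A (n - 1)) := by
  obtain ⟨m, rfl⟩ := Nat.exists_eq_add_of_le hn
  have e1 : 2 * (1 + m) - 1 = m + m + 1 := by omega
  have e2 : 2 * (1 + m) = (m + 1) + m + 1 := by omega
  have e3 : 1 + m = m + 1 := by omega
  have e4 : 1 + m - 1 = m := by omega
  have e5 : 1 + m + 1 = m + 2 := by omega
  have ha := gpoly_add A m m
  have hb := gpoly_add A (m + 1) m
  have hc := gpoly_cassini A m
  rw [e1, e2, e3]
  simp only [Nat.add_sub_cancel]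
  rw [ha, hb]
  refine ⟨by ring, by linear_combination -hc, by linear_combination hc⟩
end

section
/- If A is a nontrivial commutative ring and gcd(i,j) = 1, then R(A;i,j) is a nontrivial ring, i.e. 1 ≠ 0 in R(A;i,j). -/
/-! ### Auxiliary geometric sum lemmas -/

section GeomAux

variable {B : Type*} [CommRing B]

lemma geomSum_range_add (x : B) (a b : ℕ) :
    ∑ r ∈ Finset.range (a + b), x ^ r
      = (∑ r ∈ Finset.range a, x ^ r) + x ^ a * ∑ r ∈ Finset.range b, x ^ r := by
  rw [Finset.sum_range_add, Finset.mul_sum]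
  simp [pow_add]

lemma geomSum_range_mul (x : B) (a b : ℕ) :
    ∑ r ∈ Finset.range (a * b), x ^ r
      = (∑ r ∈ Finset.range a, x ^ r) * ∑ r ∈ Finset.range b, (x ^ a) ^ r := by
  induction b with
  | zero => simp
  | succ b ih =>
      rw [Nat.mul_succ, geomSum_range_add, ih, Finset.sum_range_succ, mul_add, ← pow_mul]
      ring

lemma pow_mod_eq {σ : B} {n : ℕ} (h : σ ^ n = 1) (m : ℕ) : σ ^ m = σ ^ (m % n) := by
  conv_lhs => rw [← Nat.div_add_mod m n]
  rw [pow_add, pow_mul, h, one_pow, one_mul]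

lemma mod_mul_inv_cancel {n m m' : ℕ} (hm' : m * m' % n = 1) {a : ℕ} (ha : a < n) :
    m' * (m * a % n) % n = a := by
  have h1 : m' * (m * a % n) ≡ m' * (m * a) [MOD n] :=
    Nat.ModEq.mul_left m' (Nat.mod_modEq (m * a) n)
  have h2 : (m * m') * a ≡ 1 * a [MOD n] :=
    Nat.ModEq.mul_right a (by rw [← hm']; exact (Nat.mod_modEq _ n).symm)
  have h3 : m' * (m * a) = (m * m') * a := by ring
  have := (h1.trans (h3 ▸ h2)) -- : m' * (m*a%n) ≡ 1*a [MOD n]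
  calc m' * (m * a % n) % n = (1 * a) % n := this
    _ = a := by rw [one_mul, Nat.mod_eq_of_lt ha]

lemma sum_pow_coprime {σ : B} {n : ℕ} (hn : 1 < n) (h : σ ^ n = 1)
    {m : ℕ} (hm : Nat.Coprime m n) :
    ∑ s ∈ Finset.range n, σ ^ (m * s) = ∑ s ∈ Finset.range n, σ ^ s := by
  obtain ⟨m', -, hm'⟩ := Nat.exists_mul_mod_eq_one_of_coprime hm hn
  have hm'2 : m' * m % n = 1 := by rw [mul_comm]; exact hm'
  have hn0 : 0 < n := lt_trans one_pos hn
  refine Finset.sum_nbij' (fun s => m * s % n) (fun s => m' * s % n)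
    (fun a ha => Finset.mem_range.2 (Nat.mod_lt _ hn0))
    (fun a ha => Finset.mem_range.2 (Nat.mod_lt _ hn0)) ?_ ?_ ?_
  · intro a ha
    exact mod_mul_inv_cancel hm' (Finset.mem_range.1 ha)
  · intro a ha
    exact mod_mul_inv_cancel hm'2 (Finset.mem_range.1 ha)
  · intro a ha
    exact pow_mod_eq h (m * a)

end GeomAux

/-! ### The key construction: a 2×2 triangular matrix representation -/

lemma add_fin_two {α : Type*} [Add α] (a b c d e f g h : α) :
    !![a, b; c, d] + !![e, f; g, h] = !![a + e, b + f; c + g, d + h] := by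
  ext x y
  fin_cases x <;> fin_cases y <;> rfl

lemma zero_fin_two {α : Type*} [Zero α] : (0 : Matrix (Fin 2) (Fin 2) α) = !![0, 0; 0, 0] := by
  ext x y
  fin_cases x <;> fin_cases y <;> rfl

theorem matRing_nontrivial_of_elem (A : Type*) [CommRing A] (B : Type*) [CommRing B]
    [Nontrivial B] [Algebra A B] (i j : ℕ) (hi : 1 ≤ i) (hj : 1 ≤ j)
    (hgcd : Nat.gcd i j = 1) (t : B) (H1 : t ^ (i + j) = -1)
    (H2 : ∑ s ∈ Finset.range (i + j), (t ^ 2) ^ s = 0) :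
    Nontrivial (MatRing A i j) := by
  have hn1 : 1 < i + j := by omega
  -- basic elements
  set u : B := (-1) ^ i * t ^ j with hu_def
  set w : B := (-1) ^ (i + 1) * t ^ i with hw_def
  set ξ : B := (t ^ 2) ^ i with hxi_def
  have hw : w = u * ξ := by
    have ht : t ^ (j + 2 * i) = -t ^ i := by
      rw [show j + 2 * i = (i + j) + i by ring, pow_add, H1]; ring
    rw [hu_def, hw_def, hxi_def, ← pow_mul, mul_assoc, ← pow_add, ht, pow_succ]
    ring
  have h2n : (t ^ 2) ^ (i + j) = 1 := by
    rw [← pow_mul, mul_comm, pow_mul, H1]; norm_num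
  have hxin : ξ ^ (i + j) = 1 := by
    rw [hxi_def, ← pow_mul, mul_comm, pow_mul, h2n, one_pow]
  have hcopin : Nat.Coprime i (i + j) := by
    rw [add_comm]
    exact Nat.coprime_add_self_right.mpr hgcd
  have hNn : (∑ r ∈ Finset.range (i + j), ξ ^ r) = 0 := by
    calc ∑ r ∈ Finset.range (i + j), ξ ^ r
        = ∑ r ∈ Finset.range (i + j), (t ^ 2) ^ (i * r) := by
          refine Finset.sum_congr rfl fun r _ => ?_
          rw [hxi_def, ← pow_mul]
      _ = ∑ r ∈ Finset.range (i + j), (t ^ 2) ^ r := sum_pow_coprime hn1 h2n hcopin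
      _ = 0 := H2
  -- units
  have hut : IsUnit t := by
    refine IsUnit.of_mul_eq_one (a := t) (-(t ^ (i + j - 1))) ?_
    rw [mul_neg, ← pow_succ']
    rw [show i + j - 1 + 1 = i + j by omega, H1, neg_neg]
  have hu : IsUnit u := ((isUnit_one.neg).pow i).mul (hut.pow j)
  -- inverse of the geometric sum
  obtain ⟨i', -, hii'⟩ := Nat.exists_mul_mod_eq_one_of_coprime hcopin hn1
  have hiicd : i * i' = 1 + (i + j) * (i * i' / (i + j)) := by
    conv_lhs => rw [← Nat.div_add_mod (i * i') (i + j)]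
    rw [hii']; ring
  have hNinv : (∑ r ∈ Finset.range i, ξ ^ r) * (∑ r ∈ Finset.range i', (ξ ^ i) ^ r) = 1 := by
    rw [← geomSum_range_mul, hiicd, geomSum_range_add,
      geomSum_range_mul ξ (i + j) (i * i' / (i + j)), hNn]
    simp
  -- the h-sequence
  have hhrec : ∀ k, u ^ ((k + 1) - 1) * ∑ r ∈ Finset.range (k + 1), ξ ^ r
      = u ^ k + (u ^ (k - 1) * ∑ r ∈ Finset.range k, ξ ^ r) * w := by
    intro k
    cases k with
    | zero => simp
    | succ k =>
        rw [hw]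
        have hpeel : ∑ r ∈ Finset.range (k + 2), ξ ^ r
            = (ξ * ∑ r ∈ Finset.range (k + 1), ξ ^ r) + 1 := by
          rw [Finset.sum_range_succ', Finset.mul_sum]
          simp [pow_succ, mul_comm]
        rw [show k + 1 + 1 - 1 = k + 1 by omega, show k + 1 - 1 = k by omega, hpeel,
          pow_succ]
        ring
  -- matrix powers
  have hXpow : ∀ k, (!![u, 1; 0, w] : Matrix (Fin 2) (Fin 2) B) ^ k
      = !![u ^ k, u ^ (k - 1) * ∑ r ∈ Finset.range k, ξ ^ r; 0, w ^ k] := by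
    intro k
    induction k with
    | zero => rw [pow_zero, Matrix.one_fin_two]; simp
    | succ k ih =>
        rw [pow_succ, ih, Matrix.mul_fin_two]
        rw [show u ^ k * u + (u ^ (k - 1) * ∑ r ∈ Finset.range k, ξ ^ r) * 0 = u ^ (k + 1) by
            rw [pow_succ]; ring]
        rw [show u ^ k * 1 + (u ^ (k - 1) * ∑ r ∈ Finset.range k, ξ ^ r) * w
            = u ^ ((k + 1) - 1) * ∑ r ∈ Finset.range (k + 1), ξ ^ r by rw [hhrec k]; ring]
        rw [show (0 : B) * u + w ^ k * 0 = 0 by ring]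
        rw [show (0 : B) * 1 + w ^ k * w = w ^ (k + 1) by rw [pow_succ]; ring]
  -- F1 : w^i + u^j = 0
  have hwiu : w ^ i = t ^ (i * i) := by
    rw [hw_def, mul_pow, ← pow_mul, ← pow_mul]
    have : ((-1 : B)) ^ ((i + 1) * i) = 1 :=
      Even.neg_one_pow (by rw [mul_comm]; exact Nat.even_mul_succ_self i)
    rw [this, one_mul]
  have huju : u ^ j = (-1) ^ (i * j) * t ^ (j * j) := by
    rw [hu_def, mul_pow, ← pow_mul, ← pow_mul]
  have hkey : t ^ (i * i) * (-1 : B) ^ j = t ^ (j * j) * (-1) ^ i := by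
    calc t ^ (i * i) * (-1 : B) ^ j = t ^ (i * i) * (t ^ (i + j)) ^ j := by rw [H1]
      _ = t ^ (i * i + (i + j) * j) := by rw [← pow_mul, ← pow_add]
      _ = t ^ (j * j + (i + j) * i) := by rw [show i * i + (i + j) * j = j * j + (i + j) * i by ring]
      _ = t ^ (j * j) * (t ^ (i + j)) ^ i := by rw [← pow_mul, ← pow_add]
      _ = t ^ (j * j) * (-1) ^ i := by rw [H1]
  have hsign : ((-1 : B) ^ (i + j)) + (-1) ^ (i * j) = 0 := by
    rcases Nat.even_or_odd i with hei | hoi <;> rcases Nat.even_or_odd j with hej | hoj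
    · exfalso
      have h2 : 2 ∣ Nat.gcd i j := Nat.dvd_gcd hei.two_dvd hej.two_dvd
      rw [hgcd] at h2
      omega
    · rw [Odd.neg_one_pow (hei.add_odd hoj), Even.neg_one_pow (hei.mul_right j)]; ring
    · rw [Odd.neg_one_pow (hoi.add_even hej), Even.neg_one_pow (hej.mul_left i)]; ring
    · rw [Even.neg_one_pow (hoi.add_odd hoj), Odd.neg_one_pow (hoi.mul hoj)]; ring
  have hF1 : w ^ i + u ^ j = 0 := by
    have hsq : ((-1 : B) ^ j) * ((-1 : B) ^ j) = 1 := by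
      rw [← pow_add]; exact Even.neg_one_pow ⟨j, rfl⟩
    have hii : t ^ (i * i) = (-1 : B) ^ (i + j) * t ^ (j * j) := by
      calc t ^ (i * i) = t ^ (i * i) * (((-1 : B) ^ j) * ((-1) ^ j)) := by rw [hsq, mul_one]
        _ = (t ^ (i * i) * (-1) ^ j) * (-1) ^ j := by ring
        _ = (t ^ (j * j) * (-1) ^ i) * (-1) ^ j := by rw [hkey]
        _ = (-1) ^ (i + j) * t ^ (j * j) := by rw [pow_add]; ring
    rw [hwiu, huju, hii]
    calc (-1 : B) ^ (i + j) * t ^ (j * j) + (-1) ^ (i * j) * t ^ (j * j)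
        = ((-1) ^ (i + j) + (-1) ^ (i * j)) * t ^ (j * j) := by ring
      _ = 0 := by rw [hsign, zero_mul]
  -- h i = h j (as elements) and the inverse γ
  obtain ⟨γ₁, hγ₁⟩ := (hu.pow (i - 1)).exists_right_inv
  set γ : B := γ₁ * ∑ r ∈ Finset.range i', (ξ ^ i) ^ r with hγ_def
  have hγi : (u ^ (i - 1) * ∑ r ∈ Finset.range i, ξ ^ r) * γ = 1 := by
    calc (u ^ (i - 1) * ∑ r ∈ Finset.range i, ξ ^ r) * γ
        = (u ^ (i - 1) * γ₁) *
            ((∑ r ∈ Finset.range i, ξ ^ r) * (∑ r ∈ Finset.range i', (ξ ^ i) ^ r)) := by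
          rw [hγ_def]; ring
      _ = 1 := by rw [hγ₁, hNinv, one_mul]
  have hNsplit : (∑ r ∈ Finset.range i, ξ ^ r) + ξ ^ i * ∑ r ∈ Finset.range j, ξ ^ r = 0 := by
    rw [← geomSum_range_add]; exact hNn
  have hij : u ^ (i - 1) * ∑ r ∈ Finset.range i, ξ ^ r
      = u ^ (j - 1) * ∑ r ∈ Finset.range j, ξ ^ r := by
    have hNi : (∑ r ∈ Finset.range i, ξ ^ r) = -(ξ ^ i * ∑ r ∈ Finset.range j, ξ ^ r) :=
      eq_neg_of_add_eq_zero_left hNsplit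
    have hwi2 : u ^ i * ξ ^ i = -(u ^ j) := by
      rw [← mul_pow, ← hw]
      exact eq_neg_of_add_eq_zero_left hF1
    have hcancel : u ^ (i - 1) * ξ ^ i = -(u ^ (j - 1)) := by
      apply hu.mul_left_cancel
      calc u * (u ^ (i - 1) * ξ ^ i) = u ^ (1 + (i - 1)) * ξ ^ i := by rw [pow_add, pow_one]; ring
        _ = u ^ i * ξ ^ i := by rw [show 1 + (i - 1) = i by omega]
        _ = -(u ^ j) := hwi2
        _ = -(u ^ (1 + (j - 1))) := by rw [show 1 + (j - 1) = j by omega]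
        _ = u * -(u ^ (j - 1)) := by rw [pow_add, pow_one]; ring
    calc u ^ (i - 1) * ∑ r ∈ Finset.range i, ξ ^ r
        = (u ^ (i - 1) * ξ ^ i) * -(∑ r ∈ Finset.range j, ξ ^ r) := by rw [hNi]; ring
      _ = (-(u ^ (j - 1))) * -(∑ r ∈ Finset.range j, ξ ^ r) := by rw [hcancel]
      _ = u ^ (j - 1) * ∑ r ∈ Finset.range j, ξ ^ r := by ring
  have hγj : (u ^ (j - 1) * ∑ r ∈ Finset.range j, ξ ^ r) * γ = 1 := by rw [← hij]; exact hγi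
  -- the matrices
  set Xm : Matrix (Fin 2) (Fin 2) B := !![u, 1; 0, w] with hXm_def
  set Ym : Matrix (Fin 2) (Fin 2) B := !![0, 0; γ, 0] with hYm_def
  have hrel1 : Xm ^ i * Ym + Ym * Xm ^ j = 1 := by
    rw [hXm_def, hXpow i, hXpow j, hYm_def, Matrix.mul_fin_two, Matrix.mul_fin_two,
      add_fin_two, Matrix.one_fin_two]
    rw [show u ^ i * 0 + (u ^ (i - 1) * ∑ r ∈ Finset.range i, ξ ^ r) * γ + (0 * u ^ j + 0 * 0)
        = (u ^ (i - 1) * ∑ r ∈ Finset.range i, ξ ^ r) * γ by ring, hγi]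
    rw [show u ^ i * 0 + (u ^ (i - 1) * ∑ r ∈ Finset.range i, ξ ^ r) * 0 +
        (0 * (u ^ (j - 1) * ∑ r ∈ Finset.range j, ξ ^ r) + 0 * w ^ j) = (0 : B) by ring]
    rw [show (0 : B) * 0 + w ^ i * γ + (γ * u ^ j + 0 * 0) = (w ^ i + u ^ j) * γ by ring, hF1,
      zero_mul]
    rw [show (0 : B) * 0 + w ^ i * 0 + (γ * (u ^ (j - 1) * ∑ r ∈ Finset.range j, ξ ^ r) + 0 * w ^ j)
        = (u ^ (j - 1) * ∑ r ∈ Finset.range j, ξ ^ r) * γ by ring, hγj]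
  have hrel2 : Ym * Ym = 0 := by
    rw [hYm_def, Matrix.mul_fin_two, zero_fin_two]
    simp
  -- the algebra morphism
  let F : FreeAlgebra A (Fin 2) →ₐ[A] Matrix (Fin 2) (Fin 2) B :=
    FreeAlgebra.lift A ![Xm, Ym]
  have hF0 : F (FreeAlgebra.ι A (0 : Fin 2)) = Xm := by
    simp only [F, FreeAlgebra.lift_ι_apply]
    rfl
  have hFy : F (FreeAlgebra.ι A (1 : Fin 2)) = Ym := by
    simp only [F, FreeAlgebra.lift_ι_apply]
    rfl
  have hcompat : ∀ ⦃a b⦄, MatRel A i j a b → F a = F b := by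
    intro a b hab
    cases hab with
    | rel1 =>
        rw [map_add, map_mul, map_mul, map_pow, map_pow, hF0, hFy, map_one]
        exact hrel1
    | rel2 =>
        rw [map_pow, hFy, map_zero, pow_two]
        exact hrel2
  let G : MatRing A i j →ₐ[A] Matrix (Fin 2) (Fin 2) B := RingQuot.liftAlgHom A ⟨F, hcompat⟩
  have hmat : (1 : Matrix (Fin 2) (Fin 2) B) ≠ 0 := by
    intro hcon
    have h00 := congrFun (congrFun hcon 0) 0
    simp [Matrix.one_apply] at h00
  exact ⟨1, 0, fun hcon => hmat (by rw [← map_one G, hcon, map_zero])⟩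

theorem stmt14 (A : Type*) [CommRing A] [Nontrivial A] (i j : ℕ) (hi : 1 ≤ i) (hj : 1 ≤ j)
    (hgcd : Nat.gcd i j = 1) : Nontrivial (MatRing A i j) := by
  have hn1 : 1 < i + j := by omega
  rcases Nat.even_or_odd (i + j) with hev | hodd
  · -- even case : B = A[X]/(X^(i+j) + 1), t = root
    set f : Polynomial A := Polynomial.X ^ (i + j) + Polynomial.C 1 with hf_def
    have hmonic : f.Monic := Polynomial.monic_X_pow_add_C 1 (by omega)
    haveI : Nontrivial (AdjoinRoot f) := by
      refine ⟨1, 0, fun hcon => ?_⟩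
      rw [← map_one (AdjoinRoot.mk f)] at hcon
      have hdvd : f ∣ 1 := AdjoinRoot.mk_eq_zero.1 hcon
      have hfone : f = 1 := hmonic.eq_one_of_isUnit (isUnit_of_dvd_one hdvd)
      have hdegf : f.natDegree = i + j := by
        rw [hf_def]; exact Polynomial.natDegree_X_pow_add_C
      rw [hfone, Polynomial.natDegree_one] at hdegf
      omega
    have hroot : (AdjoinRoot.root f) ^ (i + j) + 1 = 0 := by
      have hms : (AdjoinRoot.mk f) (Polynomial.X ^ (i + j) + Polynomial.C 1) = 0 := by
        rw [← hf_def]; exact AdjoinRoot.mk_self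
      rwa [map_add, map_pow, AdjoinRoot.mk_X, Polynomial.C_1, map_one] at hms
    have H1 : (AdjoinRoot.root f) ^ (i + j) = -1 := eq_neg_of_add_eq_zero_left hroot
    obtain ⟨m, hm⟩ := hev
    have H2 : ∑ s ∈ Finset.range (i + j), ((AdjoinRoot.root f) ^ 2) ^ s = 0 := by
      have hσm : ((AdjoinRoot.root f) ^ 2) ^ m = -1 := by
        rw [← pow_mul, show 2 * m = i + j by omega]
        exact H1
      rw [hm, geomSum_range_add, hσm]
      ring
    exact matRing_nontrivial_of_elem A (AdjoinRoot f) i j hi hj hgcd (AdjoinRoot.root f) H1 H2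
  · -- odd case : B = A[X]/(1 + X + ... + X^(i+j-1)), t = -root
    set f : Polynomial A := ∑ k ∈ Finset.range (i + j), Polynomial.X ^ k with hf_def
    have hfsplit : f = Polynomial.X ^ (i + j - 1) +
        ∑ k ∈ Finset.range (i + j - 1), Polynomial.X ^ k := by
      rw [hf_def, show i + j = (i + j - 1) + 1 by omega, Finset.sum_range_succ]
      simp only [Nat.add_sub_cancel]
      ring
    have hmonic : f.Monic := by
      rw [hfsplit]
      refine Polynomial.Monic.add_of_left (Polynomial.monic_X_pow _) ?_
      refine lt_of_le_of_lt (Polynomial.degree_sum_le _ _) ?_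
      rw [Polynomial.degree_X_pow]
      refine (Finset.sup_lt_iff (WithBot.bot_lt_coe _)).2 ?_
      intro k hk
      rw [Polynomial.degree_X_pow]
      exact_mod_cast Finset.mem_range.1 hk
    haveI : Nontrivial (AdjoinRoot f) := by
      refine ⟨1, 0, fun hcon => ?_⟩
      rw [← map_one (AdjoinRoot.mk f)] at hcon
      have hdvd : f ∣ 1 := AdjoinRoot.mk_eq_zero.1 hcon
      have hfone : f = 1 := hmonic.eq_one_of_isUnit (isUnit_of_dvd_one hdvd)
      have hc1 : f.coeff 1 = 1 := by
        rw [hf_def, Polynomial.finset_sum_coeff]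
        simp only [Polynomial.coeff_X_pow]
        rw [Finset.sum_ite_eq (Finset.range (i + j)) 1 fun _ => (1 : A)]
        simp [Finset.mem_range, hn1]
      rw [hfone, Polynomial.coeff_one] at hc1
      simp at hc1
    have hNY : ∑ k ∈ Finset.range (i + j), (AdjoinRoot.root f) ^ k = 0 := by
      have hms : (AdjoinRoot.mk f) (∑ k ∈ Finset.range (i + j), Polynomial.X ^ k) = 0 := by
        rw [← hf_def]; exact AdjoinRoot.mk_self
      rw [map_sum] at hms
      have : ∀ k ∈ Finset.range (i + j),
          (AdjoinRoot.mk f) (Polynomial.X ^ k) = (AdjoinRoot.root f) ^ k := by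
        intro k _
        rw [map_pow, AdjoinRoot.mk_X]
      rwa [Finset.sum_congr rfl this] at hms
    have hYn : (AdjoinRoot.root f) ^ (i + j) = 1 := by
      have := geom_sum_mul (AdjoinRoot.root f) (i + j)
      rw [hNY, zero_mul] at this
      exact (sub_eq_zero.1 this.symm)
    have H1 : (-(AdjoinRoot.root f)) ^ (i + j) = -1 := by
      rw [Odd.neg_pow hodd, hYn]
    have H2 : ∑ s ∈ Finset.range (i + j), ((-(AdjoinRoot.root f)) ^ 2) ^ s = 0 := by
      have hsq : (-(AdjoinRoot.root f)) ^ 2 = (AdjoinRoot.root f) ^ 2 := neg_sq _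
      rw [hsq]
      calc ∑ s ∈ Finset.range (i + j), ((AdjoinRoot.root f) ^ 2) ^ s
          = ∑ s ∈ Finset.range (i + j), (AdjoinRoot.root f) ^ (2 * s) := by
            refine Finset.sum_congr rfl fun s _ => ?_
            rw [← pow_mul]
        _ = ∑ s ∈ Finset.range (i + j), (AdjoinRoot.root f) ^ s :=
            sum_pow_coprime hn1 hYn (Nat.coprime_two_left.mpr hodd)
        _ = 0 := hNY
    exact matRing_nontrivial_of_elem A (AdjoinRoot f) i j hi hj hgcd (-(AdjoinRoot.root f)) H1 H2
end

section
/- Let k be a field of characteristic different from 2 and let G be a finite subgroup of the multiplicative group of k with |G| = n. For a natural number m ≥ 1, there exists g ∈ G with g^m = −1 if and only if ν₂(m) + 1 ≤ ν₂(n), where ν₂ denotes the 2-adic valuation. -/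
theorem stmt17 (k : Type*) [Field k] (hchar : ringChar k ≠ 2)
    (G : Subgroup kˣ) [Finite G] (n : ℕ) (hn : n = Nat.card G)
    (m : ℕ) (hm : 1 ≤ m) :
    (∃ g ∈ G, (g : kˣ) ^ m = -1) ↔ padicValNat 2 m + 1 ≤ padicValNat 2 n := by
  haveI : Fact (Nat.Prime 2) := ⟨Nat.prime_two⟩
  have hne1 : (-1 : kˣ) ≠ 1 := by
    intro h
    exact Ring.neg_one_ne_one_of_char_ne_two hchar (by simpa using congrArg Units.val h)
  have hn0 : n ≠ 0 := by rw [hn]; exact Nat.card_pos.ne'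
  have hm0 : m ≠ 0 := by omega
  constructor
  · rintro ⟨g, hg, hgm⟩
    set d := orderOf g with hd
    have hdn : d ∣ n := hn ▸ G.orderOf_dvd_natCard hg
    have hd2m : d ∣ 2 * m := by
      apply orderOf_dvd_of_pow_eq_one
      rw [mul_comm, pow_mul, hgm]; simp
    have hdm : ¬ d ∣ m := fun h => hne1 (hgm ▸ orderOf_dvd_iff_pow_eq_one.mp h)
    have hd0 : d ≠ 0 := fun h => hn0 (Nat.eq_zero_of_zero_dvd (h ▸ hdn))
    have key : padicValNat 2 m + 1 ≤ padicValNat 2 d := by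
      by_contra hlt
      push_neg at hlt
      have hle : padicValNat 2 d ≤ padicValNat 2 m := by omega
      obtain ⟨t, ht⟩ := hd2m
      have ht0 : t ≠ 0 := by rintro rfl; simp at ht; omega
      have hv : 1 + padicValNat 2 m = padicValNat 2 d + padicValNat 2 t := by
        have h1 : padicValNat 2 (2 * m) = 1 + padicValNat 2 m := by
          rw [padicValNat.mul two_ne_zero hm0, padicValNat.self (by norm_num)]
        have h2 : padicValNat 2 (d * t) = padicValNat 2 d + padicValNat 2 t := by
          rw [padicValNat.mul hd0 ht0]
        rw [← h1, ht, h2]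
      have h2t : 2 ∣ t := dvd_of_one_le_padicValNat (by omega)
      obtain ⟨s, rfl⟩ := h2t
      have h2 : 2 * m = 2 * (d * s) := by rw [ht]; ring
      exact hdm ⟨s, by omega⟩
    calc padicValNat 2 m + 1 ≤ padicValNat 2 d := key
      _ ≤ padicValNat 2 n := by
        rw [← padicValNat_dvd_iff_le hn0]
        exact dvd_trans pow_padicValNat_dvd hdn
  · intro hab
    set a := padicValNat 2 m with ha
    obtain ⟨ζ, hζ⟩ := IsCyclic.exists_ofOrder_eq_natCard (α := G)
    rw [← hn] at hζ
    have h2n : 2 ^ (a + 1) ∣ n := (padicValNat_dvd_iff_le hn0).mpr hab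
    set N := n / 2 ^ (a + 1) with hN
    have hNn : N ∣ n := Nat.div_dvd_of_dvd h2n
    set h := ζ ^ N with hh
    have hordh : orderOf h = 2 ^ (a + 1) := by
      rw [hh, orderOf_pow, hζ, Nat.gcd_eq_right hNn, hN, Nat.div_div_self h2n hn0]
    have hgcd : Nat.gcd (2 ^ (a + 1)) m = 2 ^ a := by
      apply Nat.dvd_antisymm
      · obtain ⟨j, hj, hje⟩ := (Nat.dvd_prime_pow Nat.prime_two).mp
          (Nat.gcd_dvd_left (2 ^ (a + 1)) m)
        have hjm : 2 ^ j ∣ m := hje ▸ Nat.gcd_dvd_right _ _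
        have : j ≤ a := (padicValNat_dvd_iff_le hm0).mp hjm
        exact hje ▸ pow_dvd_pow 2 this
      · exact Nat.dvd_gcd (pow_dvd_pow 2 (by omega)) pow_padicValNat_dvd
    have hordhm : orderOf (h ^ m) = 2 := by
      rw [orderOf_pow, hordh, hgcd, pow_succ, Nat.mul_div_cancel_left _ (Nat.two_pow_pos a)]
    set x : kˣ := ((h ^ m : G) : kˣ) with hx
    have hordx : orderOf x = 2 := by
      rw [hx, ← hordhm]
      exact Subgroup.orderOf_coe _
    have hx1 : x ≠ 1 := by
      intro hx1
      rw [hx1, orderOf_one] at hordx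
      omega
    have hxsq : (x : k) * (x : k) = 1 := by
      have := pow_orderOf_eq_one x
      rw [hordx] at this
      have : ((x ^ 2 : kˣ) : k) = ((1 : kˣ) : k) := by rw [this]
      simpa [sq] using this
    have hxneg : x = -1 := by
      rcases mul_self_eq_one_iff.mp hxsq with h1 | h1
      · exact absurd (Units.ext h1) hx1
      · exact Units.ext (by simpa using h1)
    refine ⟨(h : kˣ), SetLike.coe_mem h, ?_⟩
    rw [← hxneg, hx]
    norm_cast
end

section
/- For natural numbers i,j ≥ 1, there exist 2×2 matrices X, Y over the field ℤ₂ with two elements satisfying X^i·Y + Y·X^j = 1 and Y² = 0 if and only if either (i and j are both odd) or ((i,j) ≡ (1,2) mod 3 or (i,j) ≡ (2,1) mod 3). -/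
private def rep (i : ℕ) : ℕ := if i = 1 then 1 else (i - 2) % 6 + 2

private lemma pow8 : ∀ X : Matrix (Fin 2) (Fin 2) (ZMod 2), X ^ 8 = X ^ 2 := by decide

private lemma pow_period (X : Matrix (Fin 2) (Fin 2) (ZMod 2)) (k : ℕ) :
    X ^ (k + 8) = X ^ (k + 2) := by
  rw [pow_add, pow8, ← pow_add]

private lemma pow_rep (i : ℕ) (hi : 1 ≤ i) (X : Matrix (Fin 2) (Fin 2) (ZMod 2)) :
    X ^ i = X ^ rep i := by
  induction i using Nat.strong_induction_on with
  | _ i ih =>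
    by_cases h7 : i ≤ 7
    · have : rep i = i := by unfold rep; split <;> omega
      rw [this]
    · have h1 : i = (i - 8) + 8 := by omega
      have h2 : rep i = rep (i - 6) := by unfold rep; split <;> split <;> omega
      calc X ^ i = X ^ ((i - 8) + 8) := by rw [← h1]
        _ = X ^ (i - 6) := by rw [pow_period]; congr 1; omega
        _ = X ^ rep (i - 6) := ih (i - 6) (by omega) (by omega)
        _ = X ^ rep i := by rw [h2]

set_option maxHeartbeats 2000000 in
private lemma key_fin : ∀ r s : Fin 7,
    ((∃ X Y : Matrix (Fin 2) (Fin 2) (ZMod 2), X ^ (r.1+1) * Y + Y * X ^ (s.1+1) = 1 ∧ Y ^ 2 = 0) ↔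
      (Odd (r.1+1) ∧ Odd (s.1+1)) ∨ ((r.1+1) % 3 = 1 ∧ (s.1+1) % 3 = 2) ∨
        ((r.1+1) % 3 = 2 ∧ (s.1+1) % 3 = 1)) := by decide

private lemma key (r s : ℕ) (h1 : 1 ≤ r) (h2 : r ≤ 7) (h3 : 1 ≤ s) (h4 : s ≤ 7) :
    ((∃ X Y : Matrix (Fin 2) (Fin 2) (ZMod 2), X ^ r * Y + Y * X ^ s = 1 ∧ Y ^ 2 = 0) ↔
      (Odd r ∧ Odd s) ∨ (r % 3 = 1 ∧ s % 3 = 2) ∨ (r % 3 = 2 ∧ s % 3 = 1)) := by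
  have := key_fin ⟨r - 1, by omega⟩ ⟨s - 1, by omega⟩
  simp only [show r - 1 + 1 = r by omega, show s - 1 + 1 = s by omega] at this
  exact this

theorem stmt18 (i j : ℕ) (hi : 1 ≤ i) (hj : 1 ≤ j) :
    (∃ X Y : Matrix (Fin 2) (Fin 2) (ZMod 2), X ^ i * Y + Y * X ^ j = 1 ∧ Y ^ 2 = 0) ↔
      (Odd i ∧ Odd j) ∨ (i % 3 = 1 ∧ j % 3 = 2) ∨ (i % 3 = 2 ∧ j % 3 = 1) := by
  have hri : rep i % 6 = i % 6 ∧ 1 ≤ rep i ∧ rep i ≤ 7 := by unfold rep; split <;> omega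
  have hrj : rep j % 6 = j % 6 ∧ 1 ≤ rep j ∧ rep j ≤ 7 := by unfold rep; split <;> omega
  have e1 : (∃ X Y : Matrix (Fin 2) (Fin 2) (ZMod 2),
      X ^ i * Y + Y * X ^ j = 1 ∧ Y ^ 2 = 0) ↔
      (∃ X Y : Matrix (Fin 2) (Fin 2) (ZMod 2),
      X ^ rep i * Y + Y * X ^ rep j = 1 ∧ Y ^ 2 = 0) := by
    constructor
    · rintro ⟨X, Y, h1, h2⟩
      exact ⟨X, Y, by rw [← pow_rep i hi, ← pow_rep j hj]; exact h1, h2⟩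
    · rintro ⟨X, Y, h1, h2⟩
      exact ⟨X, Y, by rw [pow_rep i hi, pow_rep j hj]; exact h1, h2⟩
  rw [e1, key (rep i) (rep j) hri.2.1 hri.2.2 hrj.2.1 hrj.2.2]
  simp only [Nat.odd_iff]
  omega
end
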